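/- arXiv:2107.13288 — 5 statements merged into one kernel-verified Lean document; each statement's English description precedes it below -/
import Mathlib

section
/- Let G be a group, V a real vector space, and ρ : G → GL(V) a group homomorphism (write g·v for ρ(g)v). Let C ⊆ V satisfy 0 ∈ C, C + C ⊆ C, and g·C = C for all g ∈ G, and fix h ∈ V. Then S(C,h) := {g ∈ G : h − g·h ∈ C} is a submonoid of G. If, in addition, τ : G → G is an involutive group automorphism and τ_V : V → V is a linear involution satisfying τ_V(g·v) = τ(g)·τ_V(v) for all g ∈ G, v ∈ V, together with τ_V(h) = h and τ_V(C) = −C, then g ∈ S(C,h) implies g^♯ := τ(g)⁻¹ ∈ S(C,h). -/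
/-!
Writing `g·` for `ρ g`, the cocycle identity `h - (ab)·h = (h - a·h) + a·(h - b·h)` shows that
`S(C,h)` is closed under products as soon as `C` is a `G`-invariant additive submonoid.
For the `♯`-invariance, applying `τ_V` to `h - g·h ∈ C` gives `τ(g)·h - h ∈ C`, and moving
this by `τ(g)⁻¹` yields `h - τ(g)⁻¹·h ∈ C`.
-/

open Set

section

variable {G R V : Type*} [Group G] [Semiring R] [AddCommGroup V] [Module R V]

theorem sub_map_mul_eq (ρ : G →* (V ≃ₗ[R] V)) (a b : G) (h : V) :
    h - ρ (a * b) h = (h - ρ a h) + ρ a (h - ρ b h) := by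
  rw [map_mul, LinearEquiv.mul_apply, map_sub]
  abel

theorem map_inv_sub_eq (ρ : G →* (V ≃ₗ[R] V)) (g : G) (h : V) :
    ρ g⁻¹ (ρ g h - h) = h - ρ g⁻¹ h := by
  rw [map_sub, ← LinearEquiv.mul_apply, ← map_mul, inv_mul_cancel, map_one,
    LinearEquiv.coe_one, id]

/-- `S(C,h)`, the preimage of `C` under the cocycle `g ↦ h - g·h`. -/
def cocycleMemSubmonoid (ρ : G →* (V ≃ₗ[R] V)) (C : Set V) (h : V) (hC0 : (0 : V) ∈ C)
    (hCadd : ∀ a ∈ C, ∀ b ∈ C, a + b ∈ C) (hCinv : ∀ g : G, MapsTo (ρ g) C C) :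
    Submonoid G where
  carrier := {g | h - ρ g h ∈ C}
  one_mem' := by simpa using hC0
  mul_mem' {a b} ha hb := by
    rw [mem_ofPred_eq, sub_map_mul_eq]
    exact hCadd _ ha _ (hCinv a hb)

theorem sub_map_inv_mem_of_map_sub_mem {ρ : G →* (V ≃ₗ[R] V)} {C : Set V} {h : V}
    (hCinv : ∀ g : G, MapsTo (ρ g) C C) {g : G} (hg : ρ g h - h ∈ C) :
    h - ρ g⁻¹ h ∈ C :=
  map_inv_sub_eq ρ g h ▸ hCinv g⁻¹ hg

theorem map_sub_mem_of_sub_map_mem {F : Type*} [FunLike F V V] [AddMonoidHomClass F V V]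
    {ρ : G →* (V ≃ₗ[R] V)} {C : Set V} {h : V} {τ : G → G} {τV : F}
    (hcomp : ∀ (g : G) (v : V), τV (ρ g v) = ρ (τ g) (τV v)) (hτh : τV h = h)
    (hτC : MapsTo τV C (-C)) {g : G} (hg : h - ρ g h ∈ C) :
    ρ (τ g) h - h ∈ C := by
  have hneg : h - ρ (τ g) h ∈ -C := by
    simpa only [map_sub, hcomp, hτh] using hτC hg
  simpa only [mem_neg, neg_sub] using hneg

theorem sub_map_sharp_mem {F : Type*} [FunLike F V V] [AddMonoidHomClass F V V]
    {ρ : G →* (V ≃ₗ[R] V)} {C : Set V} {h : V} (hCinv : ∀ g : G, MapsTo (ρ g) C C)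
    {τ : G → G} {τV : F} (hcomp : ∀ (g : G) (v : V), τV (ρ g v) = ρ (τ g) (τV v))
    (hτh : τV h = h) (hτC : MapsTo τV C (-C)) {g : G} (hg : h - ρ g h ∈ C) :
    h - ρ (τ g)⁻¹ h ∈ C :=
  sub_map_inv_mem_of_map_sub_mem hCinv (map_sub_mem_of_sub_map_mem hcomp hτh hτC hg)

end

/-- Let `ρ : G → GL(V)` be a homomorphism, `C ⊆ V` with `0 ∈ C`, `C + C ⊆ C`,
`g·C = C` for all `g`, and `h ∈ V`. Then `S(C,h) = {g : h − g·h ∈ C}` is a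
submonoid of `G`; and if `τ` is an involutive automorphism of `G`, `τ_V` a linear
involution of `V` with `τ_V(g·v) = τ(g)·τ_V(v)`, `τ_V h = h` and `τ_V(C) = −C`,
then `g ∈ S(C,h)` implies `g^♯ = τ(g)⁻¹ ∈ S(C,h)`. -/
theorem stmt1 {G V : Type*} [Group G] [AddCommGroup V] [Module ℝ V]
    (ρ : G →* (V ≃ₗ[ℝ] V)) (C : Set V) (h : V)
    (hC0 : (0 : V) ∈ C) (hCadd : ∀ a ∈ C, ∀ b ∈ C, a + b ∈ C)
    (hCinv : ∀ g : G, (⇑(ρ g)) '' C = C) :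
    (∃ S : Submonoid G, (S : Set G) = {g : G | h - ρ g h ∈ C}) ∧
    ∀ τ : G →* G, (∀ g, τ (τ g) = g) →
      ∀ τV : V →ₗ[ℝ] V, (∀ v, τV (τV v) = v) →
        (∀ (g : G) (v : V), τV (ρ g v) = ρ (τ g) (τV v)) →
        τV h = h → (⇑τV) '' C = -C →
        ∀ g : G, h - ρ g h ∈ C → h - ρ ((τ g)⁻¹) h ∈ C := by
  have hmaps : ∀ g : G, MapsTo (ρ g) C C := fun g => mapsTo_iff_image_subset.2 (hCinv g).le
  refine ⟨⟨cocycleMemSubmonoid ρ C h hC0 hCadd hmaps, rfl⟩, ?_⟩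
  intro τ _ τV _ hcomp hτh hτC g hg
  exact sub_map_sharp_mem hmaps hcomp hτh (mapsTo_iff_image_subset.2 hτC.le) hg
end

section
/- Let G be a group acting on a set X, let H ≤ G be a subgroup, let h ∈ X with stabilizer G^h = {g ∈ G : g·h = h}, and let S ⊆ X satisfy k·S = S for all k ∈ H. Consider the left coset space G/H with its left G-action and set F = {gH ∈ G/H : g⁻¹·h ∈ S} (this condition is independent of the chosen representative g of the coset gH). Then the assignment sending the G^h-orbit of gH ∈ F to the H-orbit of g⁻¹·h is a well-defined bijection from the set of G^h-orbits in F onto the set of H-orbits in (G·h) ∩ S. -/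
open Pointwise

section

variable {G X : Type*} [Group G] [MulAction G X]

theorem smul_mem_iff_of_smul_set_eq {k : G} {S : Set X} (hk : k • S = S) {x : X} :
    k • x ∈ S ↔ x ∈ S := by
  conv_lhs => rw [← hk]
  exact Set.smul_mem_smul_set_iff

theorem inv_smul_mem_iff_of_mk_eq {H : Subgroup G} {S : Set X} (hS : ∀ k ∈ H, k • S = S)
    (x : X) {g g' : G} (hgg' : (g : G ⧸ H) = g') : g⁻¹ • x ∈ S ↔ g'⁻¹ • x ∈ S := by
  have hH : g⁻¹ * g' ∈ H := QuotientGroup.eq.mp hgg'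
  have hx : g⁻¹ • x = (g⁻¹ * g') • g'⁻¹ • x := by rw [smul_smul, mul_inv_cancel_right]
  rw [hx]
  exact smul_mem_iff_of_smul_set_eq (hS _ hH)

/-- The witnesses correspond via `k = g₂ a g₁⁻¹`. -/
theorem exists_stabilizer_smul_mk_eq_iff (H : Subgroup G) (x : X) (g₁ g₂ : G) :
    (∃ k ∈ MulAction.stabilizer G x, k • (g₁ : G ⧸ H) = g₂) ↔
      ∃ a ∈ H, a • g₁⁻¹ • x = g₂⁻¹ • x := by
  constructor
  · rintro ⟨k, hk, hkg⟩
    have hH : (k * g₁)⁻¹ * g₂ ∈ H := QuotientGroup.eq.mp hkg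
    refine ⟨g₂⁻¹ * k * g₁, by simpa [mul_assoc] using H.inv_mem hH, ?_⟩
    rw [smul_smul, mul_inv_cancel_right, mul_smul, MulAction.mem_stabilizer_iff.mp hk]
  · rintro ⟨a, ha, hax⟩
    refine ⟨g₂ * a * g₁⁻¹, ?_, ?_⟩
    · rw [MulAction.mem_stabilizer_iff, mul_smul, mul_smul, hax, smul_inv_smul]
    · rw [MulAction.Quotient.smul_mk, smul_eq_mul, inv_mul_cancel_right, QuotientGroup.eq]
      simpa [mul_assoc] using ha

end

/-- Let `G` act on `X`, `H ≤ G`, `h ∈ X` with stabilizer `G^h`, and `S ⊆ X` with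
`k·S = S` for all `k ∈ H`. On `F = {gH ∈ G/H : g⁻¹·h ∈ S}` (a condition independent
of the representative), the assignment `G^h·(gH) ↦ H·(g⁻¹·h)` is a well-defined
bijection from `F/G^h` onto `((G·h) ∩ S)/H`. -/
theorem stmt3 {G X : Type*} [Group G] [MulAction G X] (H : Subgroup G) (h : X)
    (S : Set X) (hS : ∀ k ∈ H, k • S = S) :
    (∀ g g' : G, (QuotientGroup.mk g : G ⧸ H) = QuotientGroup.mk g' →
      (g⁻¹ • h ∈ S ↔ g'⁻¹ • h ∈ S)) ∧
    (∀ g₁ g₂ : G, g₁⁻¹ • h ∈ S → g₂⁻¹ • h ∈ S →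
      ((∃ k ∈ MulAction.stabilizer G h,
          k • (QuotientGroup.mk g₁ : G ⧸ H) = QuotientGroup.mk g₂) ↔
        ∃ a ∈ H, a • (g₁⁻¹ • h) = g₂⁻¹ • h)) ∧
    (∀ y ∈ MulAction.orbit G h ∩ S, ∃ g : G, g⁻¹ • h ∈ S ∧ g⁻¹ • h = y) := by
  refine ⟨fun g g' => inv_smul_mem_iff_of_mk_eq hS h,
    fun g₁ g₂ _ _ => exists_stabilizer_smul_mk_eq_iff H h g₁ g₂, ?_⟩
  rintro y ⟨⟨g, rfl⟩, hy⟩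
  exact ⟨g⁻¹, by rwa [inv_inv], by rw [inv_inv]⟩
end

section
/- For z = x + iy ∈ ℂ^{d+1} with x, y ∈ V satisfying β(x,x) − β(y,y) = 1, β(x,y) = 0 and β(y,y) > 0, one has β(x,x) = 1 + β(y,y) > 1; and the map Γ(z) := β(x,x)^{−1/2}·(x, y) is a bijection from the set {z = x + iy : β(x,x) − β(y,y) = 1, β(x,y) = 0, β(y,y) > 0} onto the set {(u,v) ∈ V × V : β(u,u) = 1, β(u,v) = 0, 0 < β(v,v) < 1}. -/
noncomputable section

/-- `V = ℝ^{d+1}`. -/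
abbrev Vd (d : ℕ) : Type := Fin (d + 1) → ℝ

/-- The symmetric bilinear form `β(x,y) = x₀y₀ + x₁y₁ − x₂y₂ − ⋯ − x_dy_d`. -/
def betaB (d : ℕ) (x y : Vd d) : ℝ :=
  ∑ j : Fin (d + 1), (if (j : ℕ) ≤ 1 then (1 : ℝ) else -1) * x j * y j

abbrev Mat (d : ℕ) : Type := Matrix (Fin (d + 1)) (Fin (d + 1)) ℝ

/-- The group `O(β)` of linear automorphisms of `V` preserving `β`,
as a set of matrices (with the subspace topology of `End(V)`). -/
def Obeta (d : ℕ) : Set (Mat d) :=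
  {g | IsUnit g ∧ ∀ x y : Vd d, betaB d (g.mulVec x) (g.mulVec y) = betaB d x y}

/-- `G = SO_{2,d-1}(ℝ)_e`, the identity component of `O(β)`. -/
def Gset (d : ℕ) : Set (Mat d) := connectedComponentIn (Obeta d) 1

/-- Anti-de Sitter space `AdS^d = {x : β(x,x) = 1}`. -/
def AdS (d : ℕ) : Set (Vd d) := {x | betaB d x x = 1}

/-- Standard basis vector `e_i`. -/
def evec (d : ℕ) (i : Fin (d + 1)) : Vd d := fun j => if j = i then 1 else 0

/-- The positive causal cone `V₊(e₀)` at the base point. -/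
def Vplus (d : ℕ) : Set (Vd d) :=
  {v | betaB d (evec d 0) v = 0 ∧ 0 < betaB d v v ∧ 0 < betaB d v (evec d 1)}

/-- A pair `(x,y)` with `x ∈ M`, `β(x,y) = 0` is positive if some `g ∈ G`
moves it into the positive cone at the base point. -/
def posPair (d : ℕ) (x y : Vd d) : Prop :=
  ∃ g ∈ Gset d, g.mulVec x = evec d 0 ∧ g.mulVec y ∈ Vplus d

/-- Representing `z = x + iy ∈ V_ℂ` as the pair `(x,y)`: the set
`M_ℂ ∩ (V + i V_{>0})`. -/
def TubeSrc (d : ℕ) : Set (Vd d × Vd d) :=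
  {p | betaB d p.1 p.1 - betaB d p.2 p.2 = 1 ∧ betaB d p.1 p.2 = 0 ∧ 0 < betaB d p.2 p.2}

/-- The positive tube domain `𝒯_M⁺`: those `z = x + iy` in `M_ℂ ∩ 𝒯_V` for which
`Γ(z) = β(x,x)^{-1/2}(x,y)` is a positive pair. -/
def TubePlus (d : ℕ) : Set (Vd d × Vd d) :=
  {p | p ∈ TubeSrc d ∧
    posPair d ((Real.sqrt (betaB d p.1 p.1))⁻¹ • p.1) ((Real.sqrt (betaB d p.1 p.1))⁻¹ • p.2)}

/-- The involution `τ_h = diag(1,−1,−1,1,…,1)`. -/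
def tauh (d : ℕ) : Mat d :=
  Matrix.diagonal fun j : Fin (d + 1) => if (j : ℕ) = 1 ∨ (j : ℕ) = 2 then (-1 : ℝ) else 1

/-- The Euler element `h` with `h e₁ = e₂`, `h e₂ = e₁`, `h e_j = 0` otherwise. -/
def hmat (d : ℕ) : Mat d :=
  Matrix.of fun i j : Fin (d + 1) =>
    if ((i : ℕ) = 1 ∧ (j : ℕ) = 2) ∨ ((i : ℕ) = 2 ∧ (j : ℕ) = 1) then (1 : ℝ) else 0

/-- The centralizer `G^h = {g ∈ G : gh = hg}`. -/
def Gh (d : ℕ) : Set (Mat d) := {g ∈ Gset d | g * hmat d = hmat d * g}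

/-- The positivity domain `W_M⁺(h) = {x ∈ M : (x, hx) is positive}`. -/
def WplusDom (d : ℕ) : Set (Vd d) := {x ∈ AdS d | posPair d x ((hmat d).mulVec x)}

/-- `α_{it}(x) = (x₀, cos t·x₁ + i sin t·x₂, cos t·x₂ + i sin t·x₁, x₃, …, x_d)`,
written as a pair (real part, imaginary part). -/
def alphaIt (d : ℕ) (t : ℝ) (x : Vd d) : Vd d × Vd d :=
  (fun j => if (j : ℕ) = 1 ∨ (j : ℕ) = 2 then Real.cos t * x j else x j,
   fun j => if (j : ℕ) = 1 then Real.sin t * x 2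
            else if (j : ℕ) = 2 then Real.sin t * x 1 else 0)

/-- The KMS wedge domain `W_M^{KMS}(h)`. -/
def KMSdom (d : ℕ) : Set (Vd d) :=
  {x ∈ AdS d | ∀ t : ℝ, 0 < t → t < Real.pi → alphaIt d t x ∈ TubePlus d}

/-- `Γ(x + iy) = β(x,x)^{−1/2}·(x,y)`. -/
def GammaMap (d : ℕ) (p : Vd d × Vd d) : Vd d × Vd d :=
  ((Real.sqrt (betaB d p.1 p.1))⁻¹ • p.1, (Real.sqrt (betaB d p.1 p.1))⁻¹ • p.2)


/-!
`Γ` only rescales the pair `(x, y)`, so `β` is rescaled by `β(x,x)⁻¹` and the constraints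
`β(x,x) − β(y,y) = 1`, `β(x,y) = 0` turn into `β(u,u) = 1`, `β(u,v) = 0` with
`β(v,v) = 1 − β(x,x)⁻¹ ∈ (0,1)`. Conversely `β(x,x) = (1 − β(v,v))⁻¹` is read off the image,
so `Γ` is inverted by `(u,v) ↦ (1 − β(v,v))^{-1/2}·(u,v)`.
-/

lemma betaB_smul_smul (d : ℕ) (s t : ℝ) (x y : Vd d) :
    betaB d (s • x) (t • y) = s * t * betaB d x y := by
  simp only [betaB, Finset.mul_sum, Pi.smul_apply, smul_eq_mul]
  exact Finset.sum_congr rfl fun j _ => by ring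

lemma betaB_inv_sqrt_smul (d : ℕ) {a : ℝ} (ha : 0 ≤ a) (x y : Vd d) :
    betaB d ((√a)⁻¹ • x) ((√a)⁻¹ • y) = a⁻¹ * betaB d x y := by
  rw [betaB_smul_smul, ← mul_inv, Real.mul_self_sqrt ha]

lemma inv_sqrt_inv_smul_inv_sqrt_smul {E : Type*} [AddCommGroup E] [Module ℝ E]
    {a : ℝ} (ha : 0 < a) (p : E) : (√a⁻¹)⁻¹ • (√a)⁻¹ • p = p := by
  rw [Real.sqrt_inv, inv_inv, smul_inv_smul₀ (Real.sqrt_pos.mpr ha).ne']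

lemma GammaMap_eq_smul (d : ℕ) (p : Vd d × Vd d) :
    GammaMap d p = (√(betaB d p.1 p.1))⁻¹ • p := rfl

def timelikePairs (d : ℕ) : Set (Vd d × Vd d) :=
  {q | betaB d q.1 q.1 = 1 ∧ betaB d q.1 q.2 = 0 ∧ 0 < betaB d q.2 q.2 ∧ betaB d q.2 q.2 < 1}

def gammaMapInv (d : ℕ) (q : Vd d × Vd d) : Vd d × Vd d :=
  (√(1 - betaB d q.2 q.2))⁻¹ • q

lemma betaB_fst_of_mem_tubeSrc {d : ℕ} {p : Vd d × Vd d} (hp : p ∈ TubeSrc d) :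
    betaB d p.1 p.1 = 1 + betaB d p.2 p.2 ∧ 1 < betaB d p.1 p.1 := by
  obtain ⟨hdiff, -, hpos⟩ := hp
  constructor <;> linarith

lemma mapsTo_GammaMap (d : ℕ) :
    Set.MapsTo (GammaMap d) (TubeSrc d) (timelikePairs d) := by
  intro p hp
  obtain ⟨hx, hgt⟩ := betaB_fst_of_mem_tubeSrc hp
  obtain ⟨-, horth, hpos⟩ := hp
  have ha : 0 < betaB d p.1 p.1 := by linarith
  simp only [timelikePairs, Set.mem_ofPred_eq, GammaMap, betaB_inv_sqrt_smul d ha.le, horth,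
    mul_zero]
  refine ⟨inv_mul_cancel₀ ha.ne', trivial, by positivity, ?_⟩
  rw [inv_mul_lt_one₀ ha]
  linarith

lemma mapsTo_gammaMapInv (d : ℕ) :
    Set.MapsTo (gammaMapInv d) (timelikePairs d) (TubeSrc d) := by
  rintro q ⟨hu, horth, hpos, hlt⟩
  have hc : 0 < 1 - betaB d q.2 q.2 := by linarith
  simp only [TubeSrc, Set.mem_ofPred_eq, gammaMapInv, Prod.smul_fst, Prod.smul_snd,
    betaB_inv_sqrt_smul d hc.le, hu, horth, mul_zero]
  refine ⟨?_, trivial, by positivity⟩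
  rw [← mul_sub, inv_mul_cancel₀ hc.ne']

lemma invOn_gammaMapInv_GammaMap (d : ℕ) :
    Set.InvOn (gammaMapInv d) (GammaMap d) (TubeSrc d) (timelikePairs d) := by
  constructor
  · intro p hp
    obtain ⟨hx, hgt⟩ := betaB_fst_of_mem_tubeSrc hp
    have ha : 0 < betaB d p.1 p.1 := by linarith
    have hv : 1 - betaB d (GammaMap d p).2 (GammaMap d p).2 = (betaB d p.1 p.1)⁻¹ := by
      rw [GammaMap, betaB_inv_sqrt_smul d ha.le]
      field_simp
      linarith
    rw [gammaMapInv, hv, GammaMap_eq_smul, inv_sqrt_inv_smul_inv_sqrt_smul ha]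
  · rintro q ⟨hu, -, -, hlt⟩
    have hc : 0 < 1 - betaB d q.2 q.2 := by linarith
    have hx : betaB d (gammaMapInv d q).1 (gammaMapInv d q).1 = (1 - betaB d q.2 q.2)⁻¹ := by
      rw [gammaMapInv, Prod.smul_fst, betaB_inv_sqrt_smul d hc.le, hu, mul_one]
    rw [GammaMap_eq_smul, hx, gammaMapInv, inv_sqrt_inv_smul_inv_sqrt_smul hc]

theorem stmt8_general (d : ℕ) :
    (∀ p ∈ TubeSrc d, betaB d p.1 p.1 = 1 + betaB d p.2 p.2 ∧ 1 < betaB d p.1 p.1) ∧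
    Set.BijOn (GammaMap d) (TubeSrc d)
      {p : Vd d × Vd d | betaB d p.1 p.1 = 1 ∧ betaB d p.1 p.2 = 0 ∧
        0 < betaB d p.2 p.2 ∧ betaB d p.2 p.2 < 1} :=
  ⟨fun _ hp => betaB_fst_of_mem_tubeSrc hp,
    (invOn_gammaMapInv_GammaMap d).bijOn (mapsTo_GammaMap d) (mapsTo_gammaMapInv d)⟩

/-- For `z = x + iy` with `β(x,x) − β(y,y) = 1`, `β(x,y) = 0`, `β(y,y) > 0`,
one has `β(x,x) = 1 + β(y,y) > 1`, and `Γ` is a bijection from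
`M_ℂ ∩ 𝒯_V` onto `{(u,v) : β(u,u) = 1, β(u,v) = 0, 0 < β(v,v) < 1}`. -/
theorem stmt8 (d : ℕ) (hd : 2 ≤ d) :
    (∀ p ∈ TubeSrc d, betaB d p.1 p.1 = 1 + betaB d p.2 p.2 ∧ 1 < betaB d p.1 p.1) ∧
    Set.BijOn (GammaMap d) (TubeSrc d)
      {p : Vd d × Vd d | betaB d p.1 p.1 = 1 ∧ betaB d p.1 p.2 = 0 ∧
        0 < betaB d p.2 p.2 ∧ betaB d p.2 p.2 < 1} :=
  stmt8_general d
end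
end

section
/- The positive tube domain satisfies 𝒯_M⁺ = {g·(cosh(t)·e₀ + i·sinh(t)·v) : g ∈ G, t > 0, v ∈ V₊(e₀) with β(v,v) = 1}; that is, 𝒯_M⁺ = G·Exp_{e₀}(i·V₊(e₀)) where Exp_{e₀}(i·s·v) = cosh(s)e₀ + i·sinh(s)v for β(v,v)=1, s>0. -/
noncomputable section

/-
Every element of `G·Exp_{e₀}(i·V₊(e₀))` lies in the tube because `G` preserves `β` and
`cosh² t − sinh² t = 1`. Conversely, for `z = x + iy` in the positive tube with `β(y,y) = s`,
put `t = arsinh √s`, so that `cosh t = √β(x,x)`; if `g₀ ∈ G` moves `Γ(z)` to `(e₀, w)` with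
`w ∈ V₊(e₀)`, then `z = g₀⁻¹ (cosh t e₀ + i sinh t v)` for the unit vector `v = g₀ y / √s`.
Inside `O(β)` the inverse is the `β`-adjoint `η gᵀ η`, which is continuous and fixes `1`,
so it preserves the identity component `G`.
-/

open Matrix Real

section

variable {d : ℕ}

def etaM (d : ℕ) : Mat d :=
  diagonal fun j : Fin (d + 1) => if (j : ℕ) ≤ 1 then (1 : ℝ) else -1

lemma etaM_mul_self : etaM d * etaM d = 1 := by
  rw [etaM, diagonal_mul_diagonal, ← diagonal_one]
  congr 1
  ext j
  split_ifs <;> norm_num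

lemma betaB_eq_dotProduct (x y : Vd d) : betaB d x y = x ⬝ᵥ etaM d *ᵥ y := by
  simp only [betaB, dotProduct, etaM, mulVec_diagonal]
  exact Finset.sum_congr rfl fun j _ => by ring

lemma betaB_smul_left (c : ℝ) (x y : Vd d) : betaB d (c • x) y = c * betaB d x y := by
  rw [betaB_eq_dotProduct, betaB_eq_dotProduct, smul_dotProduct, smul_eq_mul]

lemma betaB_smul_right (c : ℝ) (x y : Vd d) : betaB d x (c • y) = c * betaB d x y := by
  rw [betaB_eq_dotProduct, betaB_eq_dotProduct, mulVec_smul, dotProduct_smul, smul_eq_mul]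

lemma betaB_evec_zero_self : betaB d (evec d 0) (evec d 0) = 1 := by
  rw [betaB, Finset.sum_eq_single (0 : Fin (d + 1))]
  · simp [evec]
  · intro j _ hj
    simp [evec, hj]
  · simp

lemma transpose_mul_etaM_mul_of_mem_Obeta {g : Mat d} (hg : g ∈ Obeta d) :
    gᵀ * etaM d * g = etaM d := by
  ext i j
  have h := hg.2 (Pi.single i 1) (Pi.single j 1)
  rw [betaB_eq_dotProduct, betaB_eq_dotProduct, mulVec_mulVec, dotProduct_mulVec,
    dotProduct_mulVec, vecMul_mulVec, ← Matrix.mul_assoc] at h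
  simpa [vecMul, dotProduct, Pi.single_apply] using h

def betaAdjoint (g : Mat d) : Mat d := etaM d * gᵀ * etaM d

lemma betaAdjoint_mul {g : Mat d} (hg : g ∈ Obeta d) : betaAdjoint g * g = 1 := by
  rw [betaAdjoint, Matrix.mul_assoc, Matrix.mul_assoc, ← Matrix.mul_assoc gᵀ,
    transpose_mul_etaM_mul_of_mem_Obeta hg, etaM_mul_self]

lemma mul_betaAdjoint {g : Mat d} (hg : g ∈ Obeta d) : g * betaAdjoint g = 1 :=
  mul_eq_one_comm.mp (betaAdjoint_mul hg)

lemma betaAdjoint_mulVec_mulVec {g : Mat d} (hg : g ∈ Obeta d) (u : Vd d) :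
    betaAdjoint g *ᵥ g *ᵥ u = u := by
  rw [mulVec_mulVec, betaAdjoint_mul hg, one_mulVec]

lemma betaAdjoint_mem_Obeta {g : Mat d} (hg : g ∈ Obeta d) : betaAdjoint g ∈ Obeta d := by
  refine ⟨⟨⟨betaAdjoint g, g, betaAdjoint_mul hg, mul_betaAdjoint hg⟩, rfl⟩, fun x y => ?_⟩
  rw [← hg.2, mulVec_mulVec, mulVec_mulVec, mul_betaAdjoint hg, one_mulVec, one_mulVec]

lemma one_mem_Obeta : (1 : Mat d) ∈ Obeta d :=
  ⟨isUnit_one, fun x y => by rw [one_mulVec, one_mulVec]⟩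

lemma mem_Obeta_of_mem_Gset {g : Mat d} (hg : g ∈ Gset d) : g ∈ Obeta d :=
  connectedComponentIn_subset _ _ hg

lemma betaAdjoint_mem_Gset {g : Mat d} (hg : g ∈ Gset d) : betaAdjoint g ∈ Gset d := by
  have hcont : Continuous (betaAdjoint (d := d)) :=
    (continuous_const.matrix_mul continuous_id.matrix_transpose).matrix_mul continuous_const
  have hone : betaAdjoint (1 : Mat d) = 1 := by
    rw [betaAdjoint, transpose_one, Matrix.mul_one, etaM_mul_self]
  have himage : betaAdjoint '' Obeta d ⊆ Obeta d := by
    rintro _ ⟨h, hh, rfl⟩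
    exact betaAdjoint_mem_Obeta hh
  have h := hcont.continuousOn.mapsTo_connectedComponentIn one_mem_Obeta hg
  rw [hone] at h
  exact connectedComponentIn_mono _ himage h

lemma smul_mem_Vplus {v : Vd d} (hv : v ∈ Vplus d) {a : ℝ} (ha : 0 < a) : a • v ∈ Vplus d := by
  obtain ⟨h0, hvv, h1⟩ := hv
  refine ⟨?_, ?_, ?_⟩
  · rw [betaB_smul_right, h0, mul_zero]
  · rw [betaB_smul_left, betaB_smul_right]
    positivity
  · rw [betaB_smul_left]
    positivity

lemma exp_mem_TubePlus {g : Mat d} (hg : g ∈ Gset d) {t : ℝ} (ht : 0 < t) {v : Vd d}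
    (hv : v ∈ Vplus d) (hvv : betaB d v v = 1) :
    (cosh t • g *ᵥ evec d 0, sinh t • g *ᵥ v) ∈ TubePlus d := by
  have hgO := mem_Obeta_of_mem_Gset hg
  have hsinh : 0 < sinh t := sinh_pos_iff.mpr ht
  have hxx : betaB d (cosh t • g *ᵥ evec d 0) (cosh t • g *ᵥ evec d 0) = cosh t ^ 2 := by
    rw [betaB_smul_left, betaB_smul_right, hgO.2, betaB_evec_zero_self]
    ring
  have hyy : betaB d (sinh t • g *ᵥ v) (sinh t • g *ᵥ v) = sinh t ^ 2 := by
    rw [betaB_smul_left, betaB_smul_right, hgO.2, hvv]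
    ring
  refine ⟨⟨?_, ?_, ?_⟩, betaAdjoint g, betaAdjoint_mem_Gset hg, ?_, ?_⟩
  · rw [hxx, hyy, cosh_sq_sub_sinh_sq]
  · rw [betaB_smul_left, betaB_smul_right, hgO.2, hv.1, mul_zero, mul_zero]
  · rw [hyy]
    positivity
  all_goals
    dsimp only
    rw [hxx, sqrt_sq (cosh_pos t).le, smul_smul, mulVec_smul, betaAdjoint_mulVec_mulVec hgO]
  · rw [inv_mul_cancel₀ (cosh_pos t).ne', one_smul]
  · exact smul_mem_Vplus hv (mul_pos (inv_pos.mpr (cosh_pos t)) hsinh)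

lemma exists_exp_of_mem_TubePlus {p : Vd d × Vd d} (hp : p ∈ TubePlus d) :
    ∃ g ∈ Gset d, ∃ t : ℝ, 0 < t ∧ ∃ v ∈ Vplus d,
      betaB d v v = 1 ∧ p = (cosh t • g *ᵥ evec d 0, sinh t • g *ᵥ v) := by
  obtain ⟨⟨hxy, -, hs⟩, g₀, hg₀, hx, hy⟩ := hp
  rw [mulVec_smul] at hx hy
  have hg₀O := mem_Obeta_of_mem_Gset hg₀
  set c := betaB d p.1 p.1
  set s := betaB d p.2 p.2
  have hc : 0 < √c := sqrt_pos.mpr (by linarith)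
  have hs' : 0 < √s := sqrt_pos.mpr hs
  set t := arsinh √s
  have hcosh : cosh t = √c := by
    rw [cosh_arsinh, sq_sqrt hs.le, show 1 + s = c by linarith]
  set v := (√s)⁻¹ • g₀ *ᵥ p.2
  have hv : v ∈ Vplus d := by
    convert smul_mem_Vplus hy (mul_pos (inv_pos.mpr hs') hc) using 1
    rw [smul_smul, mul_assoc, mul_inv_cancel₀ hc.ne', mul_one]
  have hvv : betaB d v v = 1 := by
    rw [betaB_smul_left, betaB_smul_right, hg₀O.2, ← mul_assoc, ← mul_inv, mul_self_sqrt hs.le,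
      inv_mul_cancel₀ hs.ne']
  refine ⟨betaAdjoint g₀, betaAdjoint_mem_Gset hg₀, t, arsinh_pos_iff.mpr hs', v, hv, hvv, ?_⟩
  rw [← hx, mulVec_smul, betaAdjoint_mulVec_mulVec hg₀O, smul_smul, hcosh,
    mul_inv_cancel₀ hc.ne', one_smul, mulVec_smul, betaAdjoint_mulVec_mulVec hg₀O, smul_smul,
    sinh_arsinh, mul_inv_cancel₀ hs'.ne', one_smul]

end

theorem stmt9_general (d : ℕ) :
    TubePlus d = {p : Vd d × Vd d | ∃ g ∈ Gset d, ∃ t : ℝ, 0 < t ∧ ∃ v ∈ Vplus d,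
      betaB d v v = 1 ∧
      p = (Real.cosh t • g.mulVec (evec d 0), Real.sinh t • g.mulVec v)} := by
  ext p
  constructor
  · exact exists_exp_of_mem_TubePlus
  · rintro ⟨g, hg, t, ht, v, hv, hvv, rfl⟩
    exact exp_mem_TubePlus hg ht hv hvv

/-- `𝒯_M⁺ = G·Exp_{e₀}(i·V₊(e₀))`, where for `v ∈ V₊(e₀)` with `β(v,v) = 1` and `t > 0`
one has `Exp_{e₀}(i t v) = cosh(t) e₀ + i sinh(t) v` (written as a pair). -/
theorem stmt9 (d : ℕ) (hd : 2 ≤ d) :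
    TubePlus d = {p : Vd d × Vd d | ∃ g ∈ Gset d, ∃ t : ℝ, 0 < t ∧ ∃ v ∈ Vplus d,
      betaB d v v = 1 ∧
      p = (Real.cosh t • g.mulVec (evec d 0), Real.sinh t • g.mulVec v)} :=
  stmt9_general d
end
end

section
/- The positivity domain of the modular vector field on anti-de Sitter space satisfies W_M⁺(h) = {g·x : g ∈ G^h, x ∈ M with x_j = 0 for all j ∉ {0,2} and x₀·x₂ > 0} (equivalently, W_M⁺(h) = G^h·{x₀e₀ + x₂e₂ : x₀² − x₂² = 1, x₀x₂ > 0}). -/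
noncomputable section

/-!
Both sides equal `{x ∈ M : x₁² < x₂², x₀x₂ > 0}`.

If `g x = e₀` and `g (hx) ∈ V₊(e₀)`, then `x₂² − x₁² = β(hx, hx) > 0` because `g` preserves
`β`. For the sign, `β(w, J y)` with `J y = (−y₁, y₀, 0, …)` never vanishes when `y ∈ M` and
`w ⊥ y` is positive (`β` has only two positive directions), so its sign is constant on the
connected group `G`; at `g` it is `β(g hx, e₁) > 0`, at `1` it is `x₀x₂`. The same argument
shows that the coordinate conditions are `G^h`-invariant.

Conversely, the group elements needed are products `s_a s_b` of two `β`-reflections. Such a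
product lies in `G` when `b` can be moved to `a` along a segment of non-null vectors, and it
commutes with `h` when both mirrors lie in the `(e₁, e₂)`-plane or both are orthogonal to it.
Two such rotations move `x` into the slice `{x₀e₀ + x₂e₂}`, and the rotation carrying `x` to
`±e₀`, which fixes `hx`, shows that `(x, hx)` is positive.
-/

open Matrix Set

lemma IsPreconnected.pos_of_pos {X : Type*} [TopologicalSpace X] {s : Set X}
    (hs : IsPreconnected s) {f : X → ℝ} (hf : ContinuousOn f s) (hne : ∀ x ∈ s, f x ≠ 0)
    {a b : X} (ha : a ∈ s) (hb : b ∈ s) (hfa : 0 < f a) : 0 < f b := by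
  by_contra! hfb
  obtain ⟨c, hc, hfc⟩ := hs.intermediate_value hb ha hf ⟨hfb, hfa.le⟩
  exact hne c hc hfc

namespace AntiDeSitter

variable {d n : ℕ}

lemma betaB_comm (x y : Vd d) : betaB d x y = betaB d y x := by
  simp only [betaB]
  exact Finset.sum_congr rfl fun j _ => by ring

lemma betaB_add_left (x y z : Vd d) : betaB d (x + y) z = betaB d x z + betaB d y z := by
  simp only [betaB, Pi.add_apply, ← Finset.sum_add_distrib]
  exact Finset.sum_congr rfl fun j _ => by ring

lemma betaB_smul_left (a : ℝ) (x y : Vd d) : betaB d (a • x) y = a * betaB d x y := by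
  simp only [betaB, Pi.smul_apply, smul_eq_mul, Finset.mul_sum]
  exact Finset.sum_congr rfl fun j _ => by ring

lemma betaB_add_right (x y z : Vd d) : betaB d x (y + z) = betaB d x y + betaB d x z := by
  rw [betaB_comm, betaB_add_left, betaB_comm y, betaB_comm z]

lemma betaB_smul_right (a : ℝ) (x y : Vd d) : betaB d x (a • y) = a * betaB d x y := by
  rw [betaB_comm, betaB_smul_left, betaB_comm y]

lemma betaB_zero_left (y : Vd d) : betaB d 0 y = 0 := by simp [betaB]

lemma betaB_neg_left (x y : Vd d) : betaB d (-x) y = -betaB d x y := by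
  rw [← neg_one_smul ℝ x, betaB_smul_left, neg_one_mul]

lemma betaB_neg_right (x y : Vd d) : betaB d x (-y) = -betaB d x y := by
  rw [betaB_comm, betaB_neg_left, betaB_comm]

lemma betaB_sub_left (x y z : Vd d) : betaB d (x - y) z = betaB d x z - betaB d y z := by
  rw [sub_eq_add_neg, betaB_add_left, betaB_neg_left, sub_eq_add_neg]

lemma betaB_sub_right (x y z : Vd d) : betaB d x (y - z) = betaB d x y - betaB d x z := by
  rw [betaB_comm, betaB_sub_left, betaB_comm y, betaB_comm z]

lemma betaB_single_left (i : Fin (d + 1)) (a : ℝ) (v : Vd d) :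
    betaB d (Pi.single i a) v = (if (i : ℕ) ≤ 1 then 1 else -1) * a * v i := by
  simp [betaB, Pi.single_apply]

lemma evec_eq_single (i : Fin (d + 1)) : evec d i = Pi.single i 1 := by
  ext j
  simp [evec, Pi.single_apply]

def flat (w : Vd d) : Vd d := fun j => (if (j : ℕ) ≤ 1 then 1 else -1) * w j

lemma flat_dotProduct (w v : Vd d) : flat w ⬝ᵥ v = betaB d w v := rfl

lemma continuous_betaB {X : Type*} [TopologicalSpace X] {x y : X → Vd d} (hx : Continuous x)
    (hy : Continuous y) : Continuous fun t => betaB d (x t) (y t) := by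
  unfold betaB
  fun_prop

/-- For null `w` this is `1`, since `2 / 0 = 0`. -/
def reflection (w : Vd d) : Mat d := 1 - (2 / betaB d w w) • vecMulVec w (flat w)

lemma reflection_mulVec (w v : Vd d) :
    reflection w *ᵥ v = v - (2 * betaB d w v / betaB d w w) • w := by
  simp only [reflection, sub_mulVec, one_mulVec, smul_mulVec, vecMulVec_mulVec,
    flat_dotProduct, op_smul_eq_smul, smul_smul]
  ring_nf

lemma reflection_mulVec_self {w : Vd d} (hw : betaB d w w ≠ 0) : reflection w *ᵥ w = -w := by
  rw [reflection_mulVec, mul_div_assoc, div_self hw]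
  module

lemma reflection_mulVec_of_orth {w v : Vd d} (h : betaB d w v = 0) : reflection w *ᵥ v = v := by
  rw [reflection_mulVec, h]
  simp

lemma reflection_mul_self {w : Vd d} (hw : betaB d w w ≠ 0) :
    reflection w * reflection w = 1 := by
  refine ext_iff_mulVec.2 fun v => ?_
  rw [← mulVec_mulVec, one_mulVec, reflection_mulVec w v, mulVec_sub, mulVec_smul,
    reflection_mulVec_self hw, reflection_mulVec]
  module

lemma reflection_mem_Obeta {w : Vd d} (hw : betaB d w w ≠ 0) : reflection w ∈ Obeta d := by
  refine ⟨IsUnit.of_mul_eq_one _ (reflection_mul_self hw), fun x y => ?_⟩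
  simp only [reflection_mulVec, betaB_sub_left, betaB_sub_right, betaB_smul_left,
    betaB_smul_right, betaB_comm x w]
  field_simp
  ring

lemma continuousOn_reflection {X : Type*} [TopologicalSpace X] {w : X → Vd d} {s : Set X}
    (hw : Continuous w) (hs : ∀ t ∈ s, betaB d (w t) (w t) ≠ 0) :
    ContinuousOn (fun t => reflection (w t)) s := by
  have hcoef : ContinuousOn (fun t => 2 / betaB d (w t) (w t)) s :=
    continuousOn_const.div (continuous_betaB hw hw).continuousOn hs
  have hvv : Continuous fun t => vecMulVec (w t) (flat (w t)) :=
    hw.matrix_vecMulVec (by unfold flat; fun_prop)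
  exact continuousOn_const.sub (hcoef.smul hvv.continuousOn)

lemma one_mem_Obeta : (1 : Mat d) ∈ Obeta d :=
  ⟨isUnit_one, fun x y => by simp only [one_mulVec]⟩

lemma mul_mem_Obeta {g k : Mat d} (hg : g ∈ Obeta d) (hk : k ∈ Obeta d) : g * k ∈ Obeta d :=
  ⟨hg.1.mul hk.1, fun x y => by rw [← mulVec_mulVec, ← mulVec_mulVec, hg.2, hk.2]⟩

lemma Gset_subset_Obeta : Gset d ⊆ Obeta d := connectedComponentIn_subset _ _

lemma one_mem_Gset : (1 : Mat d) ∈ Gset d := mem_connectedComponentIn one_mem_Obeta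

lemma mul_mem_Gset {g k : Mat d} (hg : g ∈ Gset d) (hk : k ∈ Gset d) : g * k ∈ Gset d := by
  have hmaps : (g * ·) '' Obeta d ⊆ Obeta d := by
    rintro _ ⟨k, hk, rfl⟩
    exact mul_mem_Obeta (Gset_subset_Obeta hg) hk
  have himage := (continuous_const_mul g).continuousOn.image_connectedComponentIn_subset
    (one_mem_Obeta (d := d)) ⟨k, hk, rfl⟩
  rw [mul_one] at himage
  rw [Gset, connectedComponentIn_eq hg]
  exact connectedComponentIn_mono g hmaps himage

/-- Move the first mirror from `b` to `a`; at `b` the product is `1`. -/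
lemma reflection_mul_reflection_mem_Gset {a b : Vd d}
    (h : ∀ t ∈ Icc (0 : ℝ) 1,
      betaB d (t • a + (1 - t) • b) (t • a + (1 - t) • b) ≠ 0) :
    reflection a * reflection b ∈ Gset d := by
  have hb : betaB d b b ≠ 0 := by simpa using h 0 (left_mem_Icc.2 zero_le_one)
  set γ : ℝ → Mat d := fun t => reflection (t • a + (1 - t) • b) * reflection b
  have hγ : ContinuousOn γ (Icc 0 1) :=
    (continuousOn_reflection (by fun_prop) h).mul continuousOn_const
  have hsub : γ '' Icc 0 1 ⊆ Gset d := by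
    refine (isPreconnected_Icc.image γ hγ).subset_connectedComponentIn
      ⟨0, left_mem_Icc.2 zero_le_one, by simp [γ, reflection_mul_self hb]⟩ ?_
    rintro _ ⟨t, ht, rfl⟩
    exact mul_mem_Obeta (reflection_mem_Obeta (h t ht)) (reflection_mem_Obeta hb)
  exact hsub ⟨1, right_mem_Icc.2 zero_le_one, by simp [γ]⟩

section Turn

def turn (u u' : Vd d) : Mat d := reflection u' * reflection (u + u')

variable {u u' : Vd d}

lemma betaB_right_self_ne_zero (hq : betaB d u u = betaB d u' u')
    (hc : 0 < betaB d u u * betaB d u u') : betaB d u' u' ≠ 0 :=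
  hq ▸ left_ne_zero_of_mul hc.ne'

lemma betaB_add_self_ne_zero (hq : betaB d u u = betaB d u' u')
    (hc : 0 < betaB d u u * betaB d u u') : betaB d (u + u') (u + u') ≠ 0 := by
  have : betaB d (u + u') (u + u') = 2 * (betaB d u u + betaB d u u') := by
    simp only [betaB_add_left, betaB_add_right, betaB_comm u' u, ← hq]
    ring
  have hpos : 0 < betaB d u u * (betaB d u u + betaB d u u') := by
    nlinarith [sq_nonneg (betaB d u u)]
  rw [this]
  exact mul_ne_zero two_ne_zero (right_ne_zero_of_mul hpos.ne')

lemma turn_mulVec_self (hq : betaB d u u = betaB d u' u')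
    (hc : 0 < betaB d u u * betaB d u u') : turn u u' *ᵥ u = u' := by
  have hcoef : 2 * betaB d (u + u') u / betaB d (u + u') (u + u') = 1 := by
    rw [div_eq_one_iff_eq (betaB_add_self_ne_zero hq hc)]
    simp only [betaB_add_left, betaB_add_right, betaB_comm u' u, ← hq]
    ring
  rw [turn, ← mulVec_mulVec, reflection_mulVec (u + u') u, hcoef, one_smul, sub_add_cancel_left,
    mulVec_neg, reflection_mulVec_self (betaB_right_self_ne_zero hq hc), neg_neg]

lemma turn_mulVec_of_orth {v : Vd d} (hu : betaB d u v = 0) (hu' : betaB d u' v = 0) :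
    turn u u' *ᵥ v = v := by
  have hsum : betaB d (u + u') v = 0 := by rw [betaB_add_left, hu, hu', add_zero]
  rw [turn, ← mulVec_mulVec, reflection_mulVec_of_orth hsum, reflection_mulVec_of_orth hu']

lemma turn_mem_Gset (hq : betaB d u u = betaB d u' u')
    (hc : 0 < betaB d u u * betaB d u u') : turn u u' ∈ Gset d := by
  refine reflection_mul_reflection_mem_Gset fun t ht => ?_
  have hseg : t • u' + (1 - t) • (u + u') = (1 - t) • u + u' := by module
  have hval : betaB d ((1 - t) • u + u') ((1 - t) • u + u') =
      (1 - t) ^ 2 * betaB d u u + 2 * (1 - t) * betaB d u u' + betaB d u u := by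
    simp only [betaB_add_left, betaB_add_right, betaB_smul_left, betaB_smul_right,
      betaB_comm u' u, ← hq]
    ring
  have hq0 : betaB d u u ≠ 0 := left_ne_zero_of_mul hc.ne'
  have hpos : 0 < betaB d u u * ((1 - t) ^ 2 * betaB d u u + 2 * (1 - t) * betaB d u u' +
      betaB d u u) := by
    have : 0 < betaB d u u ^ 2 := by positivity
    nlinarith [mul_nonneg (sub_nonneg.2 ht.2) hc.le, sq_nonneg ((1 - t) * betaB d u u)]
  rw [hseg, hval]
  exact right_ne_zero_of_mul hpos.ne'

end Turn

lemma two_mod_add_three : 2 % (n + 2 + 1) = 2 := Nat.mod_eq_of_lt (by omega)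

lemma zero_ne_two : (0 : Fin (n + 2 + 1)) ≠ 2 := by simp [Fin.ext_iff, two_mod_add_three]

lemma one_ne_two : (1 : Fin (n + 2 + 1)) ≠ 2 := by simp [Fin.ext_iff, two_mod_add_three]

@[simp] lemma betaB_single_zero_left (a : ℝ) (v : Vd (n + 2)) :
    betaB (n + 2) (Pi.single 0 a) v = a * v 0 := by
  simp [betaB_single_left]

@[simp] lemma betaB_single_one_left (a : ℝ) (v : Vd (n + 2)) :
    betaB (n + 2) (Pi.single 1 a) v = a * v 1 := by
  simp [betaB_single_left]

@[simp] lemma betaB_single_two_left (a : ℝ) (v : Vd (n + 2)) :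
    betaB (n + 2) (Pi.single 2 a) v = -(a * v 2) := by
  simp [betaB_single_left, two_mod_add_three]

@[simp] lemma betaB_single_zero_right (a : ℝ) (v : Vd (n + 2)) :
    betaB (n + 2) v (Pi.single 0 a) = a * v 0 := by
  rw [betaB_comm, betaB_single_zero_left]

@[simp] lemma betaB_single_one_right (a : ℝ) (v : Vd (n + 2)) :
    betaB (n + 2) v (Pi.single 1 a) = a * v 1 := by
  rw [betaB_comm, betaB_single_one_left]

@[simp] lemma betaB_single_two_right (a : ℝ) (v : Vd (n + 2)) :
    betaB (n + 2) v (Pi.single 2 a) = -(a * v 2) := by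
  rw [betaB_comm, betaB_single_two_left]

lemma hmat_eq : hmat (n + 2) = single 1 2 1 + single 2 1 1 := by
  ext i j
  simp [hmat, single_apply, Fin.ext_iff, two_mod_add_three]
  grind

lemma hmat_mulVec (v : Vd (n + 2)) :
    hmat (n + 2) *ᵥ v = Pi.single 1 (v 2) + Pi.single 2 (v 1) := by
  simp [hmat_eq, add_mulVec, single_mulVec, Pi.single]

lemma betaB_hmat_left (x y : Vd (n + 2)) :
    betaB (n + 2) (hmat (n + 2) *ᵥ x) y = -betaB (n + 2) x (hmat (n + 2) *ᵥ y) := by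
  simp only [hmat_mulVec, betaB_add_left, betaB_add_right, betaB_single_one_left,
    betaB_single_two_left, betaB_single_one_right, betaB_single_two_right]
  ring

lemma betaB_hmat_right_self (x : Vd (n + 2)) : betaB (n + 2) x (hmat (n + 2) *ᵥ x) = 0 := by
  simp only [hmat_mulVec, betaB_add_right, betaB_single_one_right, betaB_single_two_right]
  ring

lemma betaB_hmat_hmat (x : Vd (n + 2)) :
    betaB (n + 2) (hmat (n + 2) *ᵥ x) (hmat (n + 2) *ᵥ x) = x 2 ^ 2 - x 1 ^ 2 := by
  simp [hmat_mulVec, betaB_add_left, one_ne_two, one_ne_two.symm]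
  ring

lemma hmat_mulVec_zero (x : Vd (n + 2)) : (hmat (n + 2) *ᵥ x) 0 = 0 := by
  simp [hmat_mulVec, zero_ne_two]

lemma hmat_mulVec_one (x : Vd (n + 2)) : (hmat (n + 2) *ᵥ x) 1 = x 2 := by
  simp [hmat_mulVec, one_ne_two]

lemma reflection_commute_hmat {w : Vd (n + 2)} (hw : hmat (n + 2) *ᵥ w = 0) :
    Commute (reflection w) (hmat (n + 2)) := by
  refine ext_iff_mulVec.2 fun v => ?_
  have horth : betaB (n + 2) w (hmat (n + 2) *ᵥ v) = 0 := by
    rw [← neg_eq_zero, ← betaB_hmat_left, hw, betaB_zero_left]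
  rw [← mulVec_mulVec, ← mulVec_mulVec, reflection_mulVec_of_orth horth, reflection_mulVec,
    mulVec_sub, mulVec_smul, hw, smul_zero, sub_zero]

lemma reflection_semiconjBy_hmat {a b : ℝ}
    (hw : betaB (n + 2) (Pi.single 1 a + Pi.single 2 b) (Pi.single 1 a + Pi.single 2 b) ≠ 0) :
    SemiconjBy (reflection (Pi.single 1 a + Pi.single 2 b)) (hmat (n + 2)) (-hmat (n + 2)) := by
  refine ext_iff_mulVec.2 fun v => ?_
  rw [← mulVec_mulVec, ← mulVec_mulVec, neg_mulVec, reflection_mulVec, reflection_mulVec,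
    mulVec_sub, mulVec_smul]
  set q := betaB (n + 2) (Pi.single 1 a + Pi.single 2 b) (Pi.single 1 a + Pi.single 2 b) with hq
  simp only [betaB_add_left, betaB_single_one_left, betaB_single_two_left, Pi.add_apply,
    Pi.single_eq_same, Pi.single_eq_of_ne one_ne_two, Pi.single_eq_of_ne one_ne_two.symm,
    add_zero, zero_add] at hq
  ext j
  by_cases h1 : j = 1
  · subst h1
    simp [hmat_mulVec, betaB_add_left, one_ne_two, one_ne_two.symm]
    field_simp
    linear_combination (2 * v 2) * hq
  by_cases h2 : j = 2
  · subst h2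
    simp [hmat_mulVec, betaB_add_left, one_ne_two, one_ne_two.symm]
    field_simp
    linear_combination (2 * v 1) * hq
  simp [hmat_mulVec, h1, h2]

lemma turn_commute_hmat_of_ker {u u' : Vd (n + 2)} (hu : hmat (n + 2) *ᵥ u = 0)
    (hu' : hmat (n + 2) *ᵥ u' = 0) :
    Commute (turn u u') (hmat (n + 2)) :=
  (reflection_commute_hmat hu').mul_left
    (reflection_commute_hmat (by rw [mulVec_add, hu, hu', add_zero]))

lemma turn_commute_hmat_of_plane {a b a' b' : ℝ}
    (hq : betaB (n + 2) (Pi.single 1 a + Pi.single 2 b) (Pi.single 1 a + Pi.single 2 b) =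
      betaB (n + 2) (Pi.single 1 a' + Pi.single 2 b') (Pi.single 1 a' + Pi.single 2 b'))
    (hc : 0 < betaB (n + 2) (Pi.single 1 a + Pi.single 2 b) (Pi.single 1 a + Pi.single 2 b) *
      betaB (n + 2) (Pi.single 1 a + Pi.single 2 b) (Pi.single 1 a' + Pi.single 2 b')) :
    Commute (turn (Pi.single 1 a + Pi.single 2 b) (Pi.single 1 a' + Pi.single 2 b'))
      (hmat (n + 2)) := by
  have hsum : Pi.single 1 a + Pi.single 2 b + (Pi.single 1 a' + Pi.single 2 b') =
      (Pi.single 1 (a + a') + Pi.single 2 (b + b') : Vd (n + 2)) := by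
    simp only [Pi.single_add]
    abel
  have h₁ := reflection_semiconjBy_hmat (betaB_right_self_ne_zero hq hc)
  have h₂ := reflection_semiconjBy_hmat (hsum ▸ betaB_add_self_ne_zero hq hc)
  have h := h₁.neg_right.mul_left h₂
  rw [neg_neg] at h
  rwa [turn, hsum]

lemma exists_mem_Gh_mulVec_single_two {a b : ℝ} (hab : a ^ 2 < b ^ 2) (hb : 0 < b) :
    ∃ g ∈ Gh (n + 2), g *ᵥ Pi.single 2 √(b ^ 2 - a ^ 2) = Pi.single 1 a + Pi.single 2 b ∧
      ∀ c, g *ᵥ Pi.single 0 c = Pi.single 0 c := by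
  set s := √(b ^ 2 - a ^ 2)
  have hs : 0 < s := Real.sqrt_pos.2 (by linarith)
  have hs2 : s ^ 2 = b ^ 2 - a ^ 2 := Real.sq_sqrt (by linarith)
  set u : Vd (n + 2) := Pi.single 1 0 + Pi.single 2 1
  set u' : Vd (n + 2) := Pi.single 1 (a / s) + Pi.single 2 (b / s)
  have hval : ∀ x y x' y' : ℝ, betaB (n + 2) (Pi.single 1 x + Pi.single 2 y)
      (Pi.single 1 x' + Pi.single 2 y') = x * x' - y * y' := by
    intro x y x' y'
    simp [betaB_add_left, one_ne_two, one_ne_two.symm]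
    ring
  have hq : betaB (n + 2) u u = betaB (n + 2) u' u' := by
    rw [hval, hval]
    field_simp
    linarith
  have hc : 0 < betaB (n + 2) u u * betaB (n + 2) u u' := by
    rw [hval, hval]
    simpa using div_pos hb hs
  refine ⟨turn u u', ⟨turn_mem_Gset hq hc, turn_commute_hmat_of_plane hq hc⟩, ?_,
    fun c => ?_⟩
  · have hsu : Pi.single 2 s = s • u := by ext j; simp [u, Pi.single_apply]
    rw [hsu, mulVec_smul, turn_mulVec_self hq hc, smul_add, ← Pi.single_smul',
      ← Pi.single_smul', smul_eq_mul, smul_eq_mul, mul_div_cancel₀ _ hs.ne',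
      mul_div_cancel₀ _ hs.ne']
  · exact turn_mulVec_of_orth (by simp [u, zero_ne_two]) (by simp [u', zero_ne_two])

lemma exists_mem_Gh_mulVec_single_zero {v : Vd (n + 2)} (hv1 : v 1 = 0) (hv2 : v 2 = 0)
    (hv0 : 0 < v 0) (hvv : 0 < betaB (n + 2) v v) :
    ∃ g ∈ Gh (n + 2), g *ᵥ Pi.single 0 √(betaB (n + 2) v v) = v ∧
      ∀ a b, g *ᵥ (Pi.single 1 a + Pi.single 2 b) = Pi.single 1 a + Pi.single 2 b := by
  set r := √(betaB (n + 2) v v)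
  have hr : 0 < r := Real.sqrt_pos.2 hvv
  have hr2 : r ^ 2 = betaB (n + 2) v v := Real.sq_sqrt hvv.le
  set u : Vd (n + 2) := Pi.single 0 1
  set u' : Vd (n + 2) := r⁻¹ • v
  have hq : betaB (n + 2) u u = betaB (n + 2) u' u' := by
    simp [u, u', betaB_smul_left, betaB_smul_right, ← hr2]
    field_simp
  have hc : 0 < betaB (n + 2) u u * betaB (n + 2) u u' := by
    simpa [u, u'] using mul_pos (inv_pos.2 hr) hv0
  have hker : ∀ w : Vd (n + 2), w 1 = 0 → w 2 = 0 → hmat (n + 2) *ᵥ w = 0 := by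
    intro w hw1 hw2
    simp [hmat_mulVec, hw1, hw2]
  refine ⟨turn u u', ⟨turn_mem_Gset hq hc, turn_commute_hmat_of_ker ?_ ?_⟩, ?_,
    fun a b => ?_⟩
  · exact hker u (by simp [u]) (by simp [u, zero_ne_two.symm])
  · exact hker u' (by simp [u', hv1]) (by simp [u', hv2])
  · have hru : Pi.single 0 r = r • u := by ext j; simp [u, Pi.single_apply]
    rw [hru, mulVec_smul, turn_mulVec_self hq hc, smul_inv_smul₀ hr.ne']
  · refine turn_mulVec_of_orth ?_ ?_
    · simp [u, betaB_add_right, zero_ne_two]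
    · simp [u', betaB_add_right, hv1, hv2]

lemma betaB_self_nonpos {z : Vd (n + 2)} (h0 : z 0 = 0) (h1 : z 1 = 0) :
    betaB (n + 2) z z ≤ 0 := by
  refine Finset.sum_nonpos fun j _ => ?_
  split_ifs with hj
  · obtain rfl | rfl : j = 0 ∨ j = 1 := by
      simp only [Fin.ext_iff, Fin.val_zero, Fin.val_one]
      omega
    · simp [h0]
    · simp [h1]
  · nlinarith [sq_nonneg (z j)]

def minor01 (u v : Vd d) : ℝ := u 0 * v 1 - u 1 * v 0

/-- `minor01 y w = β(w, J y)` with `J y = (-y₁, y₀, 0, …)`. As `β` has only two positive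
directions, the positive vector `w ⊥ y` cannot also be orthogonal to the positive plane
`⟨y, J y⟩`. -/
lemma minor01_ne_zero {y w : Vd (n + 2)} (hy : 0 < betaB (n + 2) y y)
    (hyw : betaB (n + 2) y w = 0) (hw : 0 < betaB (n + 2) w w) : minor01 y w ≠ 0 := by
  intro hmin
  unfold minor01 at hmin
  set N := y 0 ^ 2 + y 1 ^ 2
  set m := y 0 * w 0 + y 1 * w 1
  have hN : 0 < N := by
    by_contra! hN
    have h0 : y 0 = 0 := by nlinarith [sq_nonneg (y 0), sq_nonneg (y 1)]
    have h1 : y 1 = 0 := by nlinarith [sq_nonneg (y 0), sq_nonneg (y 1)]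
    exact (betaB_self_nonpos h0 h1).not_gt hy
  set z := N • w - m • y
  have hz0 : z 0 = 0 := by
    simp only [z, Pi.sub_apply, Pi.smul_apply, smul_eq_mul, N, m]
    linear_combination (-y 1) * hmin
  have hz1 : z 1 = 0 := by
    simp only [z, Pi.sub_apply, Pi.smul_apply, smul_eq_mul, N, m]
    linear_combination (y 0) * hmin
  have hzz : betaB (n + 2) z z = N ^ 2 * betaB (n + 2) w w + m ^ 2 * betaB (n + 2) y y := by
    simp only [z, betaB_sub_left, betaB_sub_right, betaB_smul_left, betaB_smul_right,
      betaB_comm w y, hyw]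
    ring
  have := betaB_self_nonpos hz0 hz1
  nlinarith [pow_pos hN 2, sq_nonneg m, mul_pos (pow_pos hN 2) hw]

lemma minor01_mulVec_pos_iff {x v : Vd (n + 2)} {g : Mat (n + 2)} (hg : g ∈ Gset (n + 2))
    (hx : 0 < betaB (n + 2) x x) (hxv : betaB (n + 2) x v = 0) (hv : 0 < betaB (n + 2) v v) :
    0 < minor01 (g *ᵥ x) (g *ᵥ v) ↔ 0 < minor01 x v := by
  set F : Mat (n + 2) → ℝ := fun A => minor01 (A *ᵥ x) (A *ᵥ v)
  have hF : ContinuousOn F (Gset (n + 2)) := by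
    refine Continuous.continuousOn ?_
    simp only [F, minor01]
    fun_prop
  have hne : ∀ A ∈ Gset (n + 2), F A ≠ 0 := fun A hA => by
    have hA := (Gset_subset_Obeta hA).2
    exact minor01_ne_zero (by rwa [hA]) (by rwa [hA]) (by rwa [hA])
  have h1 : F 1 = minor01 x v := by simp [F]
  rw [← h1]
  exact ⟨isPreconnected_connectedComponentIn.pos_of_pos hF hne hg one_mem_Gset,
    isPreconnected_connectedComponentIn.pos_of_pos hF hne one_mem_Gset hg⟩

lemma minor01_hmat (x : Vd (n + 2)) : minor01 x (hmat (n + 2) *ᵥ x) = x 0 * x 2 := by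
  simp [minor01, hmat_mulVec_zero, hmat_mulVec_one]

def wedgeCoord (d : ℕ) : Set (Vd d) := {x ∈ AdS d | x 1 ^ 2 < x 2 ^ 2 ∧ 0 < x 0 * x 2}

def slice (d : ℕ) : Set (Vd d) :=
  {x ∈ AdS d | (∀ j : Fin (d + 1), (j : ℕ) ≠ 0 → (j : ℕ) ≠ 2 → x j = 0) ∧
    0 < x 0 * x 2}

lemma mem_Vplus_iff {v : Vd (n + 2)} :
    v ∈ Vplus (n + 2) ↔ v 0 = 0 ∧ 0 < betaB (n + 2) v v ∧ 0 < v 1 := by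
  simp [Vplus, evec_eq_single]

lemma neg_mem_wedgeCoord {x : Vd (n + 2)} (hx : x ∈ wedgeCoord (n + 2)) :
    -x ∈ wedgeCoord (n + 2) := by
  simpa [wedgeCoord, AdS, betaB_neg_left, betaB_neg_right] using hx

lemma WplusDom_subset_wedgeCoord : WplusDom (n + 2) ⊆ wedgeCoord (n + 2) := by
  rintro x ⟨hx, g, hg, hgx, hgv⟩
  have hiso := (Gset_subset_Obeta hg).2
  have hhx : 0 < betaB (n + 2) (hmat (n + 2) *ᵥ x) (hmat (n + 2) *ᵥ x) := by
    rw [← hiso]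
    exact hgv.2.1
  refine ⟨hx, by linarith [betaB_hmat_hmat x], ?_⟩
  rw [← minor01_hmat, ← minor01_mulVec_pos_iff hg (by rw [hx]; exact one_pos)
    (betaB_hmat_right_self x) hhx, hgx]
  simpa [minor01, evec_eq_single] using hgv.2.2

lemma exists_mem_Gset_neg_single_zero_one :
    ∃ R ∈ Gset (n + 2), R *ᵥ Pi.single 0 1 = -Pi.single 0 1 ∧
      R *ᵥ Pi.single 1 1 = -Pi.single 1 1 := by
  have h01 : betaB (n + 2) (Pi.single 1 1) (Pi.single 0 1) = 0 := by simp
  have h10 : betaB (n + 2) (Pi.single 0 1) (Pi.single 1 1) = 0 := by simp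
  refine ⟨reflection (Pi.single 0 1) * reflection (Pi.single 1 1),
    reflection_mul_reflection_mem_Gset fun t ht => ?_, ?_, ?_⟩
  · simp only [betaB_add_left, betaB_add_right, betaB_smul_left, betaB_smul_right]
    simp
    nlinarith [sq_nonneg t, sq_nonneg (1 - t)]
  · rw [← mulVec_mulVec, reflection_mulVec_of_orth h01, reflection_mulVec_self (by simp)]
  · rw [← mulVec_mulVec, reflection_mulVec_self (by simp), mulVec_neg,
      reflection_mulVec_of_orth h10]

lemma neg_mem_WplusDom {x : Vd (n + 2)} (hx : x ∈ WplusDom (n + 2)) :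
    -x ∈ WplusDom (n + 2) := by
  obtain ⟨hxM, g, hg, hgx, hgv⟩ := hx
  obtain ⟨R, hR, hR0, hR1⟩ := exists_mem_Gset_neg_single_zero_one (n := n)
  have hiso := (Gset_subset_Obeta hR).2
  set w := g *ᵥ (hmat (n + 2) *ᵥ x)
  have hw0 : -(R *ᵥ w) 0 = w 0 := by simpa [hR0, betaB_neg_left] using hiso (Pi.single 0 1) w
  have hw1 : -(R *ᵥ w) 1 = w 1 := by simpa [hR1, betaB_neg_left] using hiso (Pi.single 1 1) w
  have hRgx : (R * g) *ᵥ (hmat (n + 2) *ᵥ -x) = -(R *ᵥ w) := by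
    simp only [mulVec_neg, ← mulVec_mulVec, w]
  rw [mem_Vplus_iff] at hgv
  refine ⟨by simpa [AdS, betaB_neg_left, betaB_neg_right] using hxM, R * g, mul_mem_Gset hR hg,
    ?_, ?_⟩
  · rw [← mulVec_mulVec, mulVec_neg, hgx, mulVec_neg, evec_eq_single, hR0, neg_neg]
  · rw [hRgx, mem_Vplus_iff, Pi.neg_apply, Pi.neg_apply, hw0, hw1, betaB_neg_left,
      betaB_neg_right, neg_neg, hiso]
    exact hgv

lemma mem_WplusDom_of_pos {x : Vd (n + 2)} (hx : x ∈ wedgeCoord (n + 2)) (hx0 : 0 < x 0) :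
    x ∈ WplusDom (n + 2) := by
  obtain ⟨hxM, hcone, hpos⟩ := hx
  have hxM' : betaB (n + 2) x x = 1 := hxM
  have hq : betaB (n + 2) x x = betaB (n + 2) (Pi.single 0 1) (Pi.single 0 1) := by
    simp [hxM']
  have hc : 0 < betaB (n + 2) x x * betaB (n + 2) x (Pi.single 0 1) := by simpa [hxM'] using hx0
  refine ⟨hxM, turn x (Pi.single 0 1), turn_mem_Gset hq hc,
    by rw [turn_mulVec_self hq hc, evec_eq_single], ?_⟩
  rw [turn_mulVec_of_orth (betaB_hmat_right_self x) (by simp [hmat_mulVec_zero]), mem_Vplus_iff,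
    betaB_hmat_hmat, hmat_mulVec_zero, hmat_mulVec_one]
  exact ⟨rfl, by linarith, pos_of_mul_pos_right hpos hx0.le⟩

lemma WplusDom_eq_wedgeCoord : WplusDom (n + 2) = wedgeCoord (n + 2) := by
  refine WplusDom_subset_wedgeCoord.antisymm fun x hx => ?_
  rcases (left_ne_zero_of_mul hx.2.2.ne').lt_or_gt with hx0 | hx0
  · simpa using neg_mem_WplusDom (mem_WplusDom_of_pos (neg_mem_wedgeCoord hx) (by simpa using hx0))
  · exact mem_WplusDom_of_pos hx hx0

lemma neg_mem_slice {p : Vd (n + 2)} (hp : p ∈ slice (n + 2)) : -p ∈ slice (n + 2) := by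
  obtain ⟨hpM, hsupp, hpos⟩ := hp
  refine ⟨by simpa [AdS, betaB_neg_left, betaB_neg_right] using hpM, fun j hj0 hj2 => ?_, ?_⟩
  · simp [hsupp j hj0 hj2]
  · simpa using hpos

lemma single_zero_add_single_two_mem_slice {r s : ℝ} (hr : 0 < r) (hs : 0 < s)
    (hrs : r ^ 2 - s ^ 2 = 1) : (Pi.single 0 r + Pi.single 2 s : Vd (n + 2)) ∈ slice (n + 2) := by
  refine ⟨?_, fun j hj0 hj2 => ?_, ?_⟩
  · show betaB (n + 2) _ _ = 1
    simp [betaB_add_right, zero_ne_two, zero_ne_two.symm]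
    linear_combination hrs
  · have h0 : j ≠ 0 := fun h => hj0 (by simp [h])
    have h2 : j ≠ 2 := fun h => hj2 (by simp [h, two_mod_add_three])
    simp [h0, h2]
  · simpa [zero_ne_two, zero_ne_two.symm] using mul_pos hr hs

/-- Move the `(e₁, e₂)`-component of `x` onto the `e₂`-axis and the rest onto the `e₀`-axis;
each move commutes with `h`. -/
lemma exists_mem_Gh_eq_mulVec_of_pos {x : Vd (n + 2)} (hx : x ∈ wedgeCoord (n + 2))
    (hx0 : 0 < x 0) : ∃ g ∈ Gh (n + 2), ∃ p ∈ slice (n + 2), x = g *ᵥ p := by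
  obtain ⟨hxM, hcone, hpos⟩ := hx
  have hxM' : betaB (n + 2) x x = 1 := hxM
  set P : Vd (n + 2) := Pi.single 1 (x 1) + Pi.single 2 (x 2)
  set Q := x - P
  have hQ0 : Q 0 = x 0 := by simp [Q, P, zero_ne_two]
  have hQ1 : Q 1 = 0 := by simp [Q, P, one_ne_two]
  have hQ2 : Q 2 = 0 := by simp [Q, P, one_ne_two.symm]
  have hQQ : betaB (n + 2) Q Q = 1 + (x 2 ^ 2 - x 1 ^ 2) := by
    simp only [Q, P, betaB_sub_left, betaB_sub_right, betaB_add_left, betaB_add_right,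
      betaB_single_one_left, betaB_single_two_left, betaB_single_one_right,
      betaB_single_two_right, hxM']
    simp [one_ne_two, one_ne_two.symm]
    ring
  obtain ⟨B, hB, hBe2, hBe0⟩ :=
    exists_mem_Gh_mulVec_single_two (n := n) hcone (pos_of_mul_pos_right hpos hx0.le)
  have hQQ_pos : 0 < betaB (n + 2) Q Q := by rw [hQQ]; linarith
  have hΔ : 0 < x 2 ^ 2 - x 1 ^ 2 := by linarith
  obtain ⟨L, hL, hLe0, hLP⟩ := exists_mem_Gh_mulVec_single_zero hQ1 hQ2 (hQ0 ▸ hx0) hQQ_pos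
  have hp := single_zero_add_single_two_mem_slice (n := n) (Real.sqrt_pos.2 hQQ_pos)
    (Real.sqrt_pos.2 hΔ) (by rw [Real.sq_sqrt hQQ_pos.le, Real.sq_sqrt hΔ.le, hQQ]; ring)
  refine ⟨L * B, ⟨mul_mem_Gset hL.1 hB.1, Commute.mul_left hL.2 hB.2⟩, _, hp, ?_⟩
  rw [← mulVec_mulVec, mulVec_add, hBe0, hBe2, mulVec_add, hLe0, hLP, sub_add_cancel]

lemma exists_mem_Gh_eq_mulVec {x : Vd (n + 2)} (hx : x ∈ wedgeCoord (n + 2)) :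
    ∃ g ∈ Gh (n + 2), ∃ p ∈ slice (n + 2), x = g *ᵥ p := by
  rcases (left_ne_zero_of_mul hx.2.2.ne').lt_or_gt with hx0 | hx0
  · obtain ⟨g, hg, p, hp, hxp⟩ :=
      exists_mem_Gh_eq_mulVec_of_pos (neg_mem_wedgeCoord hx) (by simpa using hx0)
    exact ⟨g, hg, -p, neg_mem_slice hp, by rw [mulVec_neg, ← hxp, neg_neg]⟩
  · exact exists_mem_Gh_eq_mulVec_of_pos hx hx0

lemma mulVec_mem_wedgeCoord {g : Mat (n + 2)} {p : Vd (n + 2)} (hg : g ∈ Gh (n + 2))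
    (hp : p ∈ slice (n + 2)) : g *ᵥ p ∈ wedgeCoord (n + 2) := by
  obtain ⟨hgG, hgh⟩ := hg
  obtain ⟨hpM, hsupp, hpos⟩ := hp
  have hpM' : betaB (n + 2) p p = 1 := hpM
  have hiso := (Gset_subset_Obeta hgG).2
  have hp1 : p 1 = 0 := hsupp 1 (by simp) (by simp)
  have hhg : hmat (n + 2) *ᵥ (g *ᵥ p) = g *ᵥ (hmat (n + 2) *ᵥ p) := by
    rw [mulVec_mulVec, ← hgh, mulVec_mulVec]
  have hhp : 0 < betaB (n + 2) (hmat (n + 2) *ᵥ p) (hmat (n + 2) *ᵥ p) := by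
    have := right_ne_zero_of_mul hpos.ne'
    rw [betaB_hmat_hmat, hp1, sq (0 : ℝ), mul_zero, sub_zero]
    positivity
  refine ⟨show betaB (n + 2) _ _ = 1 by rw [hiso, hpM'], ?_, ?_⟩
  · have := betaB_hmat_hmat (g *ᵥ p)
    rw [hhg, hiso] at this
    linarith
  · rw [← minor01_hmat, hhg, minor01_mulVec_pos_iff hgG (by rw [hpM']; exact one_pos)
      (betaB_hmat_right_self p) hhp, minor01_hmat]
    exact hpos

end AntiDeSitter

open AntiDeSitter in
/-- The positivity domain of the modular vector field on `AdS^d`: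
`W_M⁺(h) = G^h·{x₀e₀ + x₂e₂ ∈ M : x₀x₂ > 0}`. -/
theorem stmt11 (d : ℕ) (hd : 2 ≤ d) :
    WplusDom d = {y : Vd d | ∃ g ∈ Gh d, ∃ x ∈ AdS d,
      (∀ j : Fin (d + 1), (j : ℕ) ≠ 0 → (j : ℕ) ≠ 2 → x j = 0) ∧
      0 < x 0 * x 2 ∧ y = g.mulVec x} := by
  obtain ⟨n, rfl⟩ := Nat.exists_eq_add_of_le' hd
  rw [WplusDom_eq_wedgeCoord]
  ext y
  constructor
  · intro hy
    obtain ⟨g, hg, p, ⟨hpM, hsupp, hpos⟩, rfl⟩ := exists_mem_Gh_eq_mulVec hy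
    exact ⟨g, hg, p, hpM, hsupp, hpos, rfl⟩
  · rintro ⟨g, hg, p, hpM, hsupp, hpos, rfl⟩
    exact mulVec_mem_wedgeCoord hg ⟨hpM, hsupp, hpos⟩
end
end
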